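/- Fix n, ℓ, δ with 2δ < ℓ ≤ n/2, ℓ | n, and δ+1 ≤ √ℓ. Let X be uniform on {0,1}^n, let 𝒟 = 𝒟_δ(ℓ,n) be the delimiter code (each block except the first starts with δ+1 zeros, each block except the last ends with δ ones), and let L(X) denote the length of the longest run in X. Then P(L(X) > √ℓ and X ∈ 𝒟) ≤ 2^{-r_𝒟} · n · 2^{-(⌈√ℓ⌉ - δ - 2)}, where r_𝒟 = (2δ+1)(n/ℓ - 1) and 2^{-r_𝒟} = P(X ∈ 𝒟). -/

import Mathlib

/-!
The delimiter code fixes `(2δ+1)(n/ℓ-1)` positions and leaves the others free. A run of length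
`t = ⌈√ℓ⌉ ≤ ℓ` meets each residue class mod `ℓ` at most once, and being monochromatic it meets
either only zero delimiters (offsets `0, …, δ` in their block) or only one delimiters (offsets
`ℓ-δ, …, ℓ-1`). So it fixes at least `t - δ - 1` further positions, and a union bound over the
`n` starting points and the two symbols gives the claim.
-/

open Finset

theorem card_le_two_pow_of_forall_eq_on {α : Type*} [Fintype α] (S : Finset α)
    {s : Finset (α → Bool)} (hs : ∀ x ∈ s, ∀ y ∈ s, ∀ j ∈ S, x j = y j) :
    #s ≤ 2 ^ (Fintype.card α - #S) := by
  classical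
  have hcard : Fintype.card ({j // j ∉ S} → Bool) = 2 ^ (Fintype.card α - #S) := by
    simp [Fintype.card_subtype_compl]
  rw [← hcard, ← card_univ]
  refine card_le_card_of_injOn (fun x j => x j.1) (fun _ _ => mem_coe.2 (mem_univ _)) ?_
  intro x hx y hy hxy
  funext j
  by_cases hj : j ∈ S
  · exact hs x hx y hy j hj
  · exact congrFun hxy ⟨j, hj⟩

def blockPositions (n ℓ : ℕ) (M R : Finset ℕ) : Finset (Fin n) :=
  {j | (j : ℕ) / ℓ ∈ M ∧ (j : ℕ) % ℓ ∈ R}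

def window (n i t : ℕ) : Finset (Fin n) :=
  {j | i ≤ (j : ℕ) ∧ (j : ℕ) < i + t}

section Positions

variable {n ℓ : ℕ}

@[simp]
theorem mem_blockPositions {M R : Finset ℕ} {j : Fin n} :
    j ∈ blockPositions n ℓ M R ↔ (j : ℕ) / ℓ ∈ M ∧ (j : ℕ) % ℓ ∈ R := by
  simp [blockPositions]

@[simp]
theorem mem_window {i t : ℕ} {j : Fin n} : j ∈ window n i t ↔ i ≤ (j : ℕ) ∧ (j : ℕ) < i + t := by
  simp [window]

theorem card_blockPositions {M R : Finset ℕ} (hR : ∀ a ∈ R, a < ℓ)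
    (hM : ∀ m ∈ M, (m + 1) * ℓ ≤ n) : #(blockPositions n ℓ M R) = #M * #R := by
  rw [← card_product]
  refine card_nbij (fun j => ((j : ℕ) / ℓ, (j : ℕ) % ℓ)) ?_ ?_ ?_
  · intro j hj
    simpa using hj
  · intro j₁ _ j₂ _ h
    simp only [Prod.mk.injEq] at h
    exact Fin.ext (by rw [← Nat.div_add_mod j₁ ℓ, ← Nat.div_add_mod j₂ ℓ, h.1, h.2])
  · rintro ⟨m, a⟩ hma
    simp only [coe_product, Set.mem_prod, mem_coe] at hma
    have ha := hR a hma.2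
    have hm := hM m hma.1
    have hlt : m * ℓ + a < n := by nlinarith
    have hdiv : (m * ℓ + a) / ℓ = m := by
      rw [Nat.add_comm, Nat.add_mul_div_right _ _ (by omega), Nat.div_eq_of_lt ha, Nat.zero_add]
    have hmod : (m * ℓ + a) % ℓ = a := by simp [Nat.mod_eq_of_lt ha]
    refine ⟨⟨m * ℓ + a, hlt⟩, ?_, ?_⟩
    · simpa [hdiv, hmod] using hma
    · simp [hdiv, hmod]

theorem disjoint_blockPositions {M M' R R' : Finset ℕ} (h : Disjoint R R') :
    Disjoint (blockPositions n ℓ M R) (blockPositions n ℓ M' R') := by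
  simp only [blockPositions, disjoint_filter]
  exact fun j _ hj hj' => disjoint_left.1 h hj.2 hj'.2

theorem card_window {i t : ℕ} (h : i + t ≤ n) : #(window n i t) = t := by
  refine (card_nbij (s := window n i t) (t := range t) (fun j => (j : ℕ) - i) ?_ ?_ ?_).trans
    (card_range t)
  · intro j hj
    simp only [mem_coe, mem_window] at hj
    simp only [coe_range, Set.mem_Iio]
    omega
  · intro j₁ hj₁ j₂ hj₂ hj
    simp only [mem_coe, mem_window] at hj₁ hj₂
    exact Fin.ext (by simp only at hj; omega)
  · intro a ha
    simp only [coe_range, Set.mem_Iio] at ha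
    exact ⟨⟨i + a, by omega⟩, by simp [window, ha], by simp⟩

theorem card_blockPositions_inter_window_le {M R : Finset ℕ} {i t : ℕ} (ht : t ≤ ℓ) :
    #(blockPositions n ℓ M R ∩ window n i t) ≤ #R := by
  refine card_le_card_of_injOn (fun j => (j : ℕ) % ℓ) ?_ ?_
  · intro j hj
    simp only [mem_coe, mem_inter, mem_blockPositions] at hj
    exact hj.1.2
  · intro j₁ hj₁ j₂ hj₂ h
    simp only [coe_inter, Set.mem_inter_iff, mem_coe, mem_window] at hj₁ hj₂
    have hmod : (j₁ - i : ℕ) ≡ (j₂ - i : ℕ) [MOD ℓ] := by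
      refine Nat.ModEq.add_right_cancel' i ?_
      rw [Nat.sub_add_cancel hj₁.2.1, Nat.sub_add_cancel hj₂.2.1]
      exact h
    have := hmod.eq_of_lt_of_lt (by omega) (by omega)
    exact Fin.ext (by omega)

end Positions

/-- Block `m` consists of the positions `mℓ ≤ j < (m+1)ℓ`. The code `𝒟_δ(ℓ,n)` fixes offsets
`0, …, δ` of the blocks `m ≥ 1` to zero and the last `δ` offsets of the blocks `m + 1 < n/ℓ`
to one. -/
def zeroDelimiters (n ℓ δ : ℕ) : Finset (Fin n) :=
  blockPositions n ℓ (Ico 1 (n / ℓ)) (range (δ + 1))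

def oneDelimiters (n ℓ δ : ℕ) : Finset (Fin n) :=
  blockPositions n ℓ (range (n / ℓ - 1)) (Ico (ℓ - δ) ℓ)

def IsDelimited (n ℓ δ : ℕ) (x : Fin n → Bool) : Prop :=
  ∀ m : ℕ, 1 ≤ m → m < n / ℓ →
    (∀ j : Fin n, m * ℓ - δ ≤ (j : ℕ) → (j : ℕ) < m * ℓ → x j = true) ∧
    (∀ j : Fin n, m * ℓ ≤ (j : ℕ) → (j : ℕ) ≤ m * ℓ + δ → x j = false)

section Delimiters

variable {n ℓ δ : ℕ}

theorem IsDelimited.eq_false {x : Fin n → Bool} (hx : IsDelimited n ℓ δ x) :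
    ∀ j ∈ zeroDelimiters n ℓ δ, x j = false := by
  intro j hj
  simp only [zeroDelimiters, mem_blockPositions, mem_Ico, mem_range] at hj
  have hj' := Nat.div_add_mod' (j : ℕ) ℓ
  exact (hx _ hj.1.1 hj.1.2).2 j (by omega) (by omega)

theorem IsDelimited.eq_true {x : Fin n → Bool} (hx : IsDelimited n ℓ δ x) :
    ∀ j ∈ oneDelimiters n ℓ δ, x j = true := by
  intro j hj
  simp only [oneDelimiters, mem_blockPositions, mem_Ico, mem_range] at hj
  have hj' := Nat.div_add_mod' (j : ℕ) ℓ
  generalize (j : ℕ) / ℓ = q at hj hj'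
  refine (hx (q + 1) (by omega) (by omega)).1 j ?_ ?_ <;> rw [Nat.succ_mul] <;> omega

theorem card_delimiters (h : 2 * δ < ℓ) :
    #(zeroDelimiters n ℓ δ ∪ oneDelimiters n ℓ δ) = (2 * δ + 1) * (n / ℓ - 1) := by
  have hblock : ∀ m, m < n / ℓ → (m + 1) * ℓ ≤ n := fun m hm =>
    (Nat.le_div_iff_mul_le (by omega)).1 hm
  have hdisj : Disjoint (range (δ + 1)) (Ico (ℓ - δ) ℓ) :=
    disjoint_left.2 fun a ha ha' => by simp only [mem_range, mem_Ico] at ha ha'; omega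
  rw [zeroDelimiters, oneDelimiters, card_union_of_disjoint (disjoint_blockPositions hdisj),
    card_blockPositions (fun a ha => by simp only [mem_range] at ha; omega)
      (fun m hm => hblock m (mem_Ico.1 hm).2),
    card_blockPositions (fun a ha => (mem_Ico.1 ha).2)
      (fun m hm => hblock m (by simp only [mem_range] at hm; omega))]
  simp only [Nat.card_Ico, card_range]
  rw [Nat.sub_sub_self (by omega)]
  ring

theorem card_delimiters_inter_window_le {i t : ℕ} (ht : t ≤ ℓ) {x : Fin n → Bool} {b : Bool}
    (hzero : ∀ j ∈ zeroDelimiters n ℓ δ, x j = false)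
    (hone : ∀ j ∈ oneDelimiters n ℓ δ, x j = true) (hb : ∀ j ∈ window n i t, x j = b) :
    #((zeroDelimiters n ℓ δ ∪ oneDelimiters n ℓ δ) ∩ window n i t) ≤ δ + 1 := by
  rw [union_inter_distrib_right]
  refine (card_union_le _ _).trans ?_
  cases b with
  | false =>
    have hempty : oneDelimiters n ℓ δ ∩ window n i t = ∅ := eq_empty_of_forall_notMem
      fun j hj => by simpa [hone j (mem_inter.1 hj).1] using hb j (mem_inter.1 hj).2
    simpa [hempty, zeroDelimiters] using card_blockPositions_inter_window_le
      (M := Ico 1 (n / ℓ)) (R := range (δ + 1)) (i := i) ht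
  | true =>
    have hempty : zeroDelimiters n ℓ δ ∩ window n i t = ∅ := eq_empty_of_forall_notMem
      fun j hj => by simpa [hzero j (mem_inter.1 hj).1] using hb j (mem_inter.1 hj).2
    have := card_blockPositions_inter_window_le (n := n) (M := range (n / ℓ - 1))
      (R := Ico (ℓ - δ) ℓ) (i := i) ht
    simp only [Nat.card_Ico] at this
    simp only [hempty, card_empty, zero_add, oneDelimiters]
    omega

end Delimiters

section Counting

variable {n ℓ δ t : ℕ}

theorem card_delimited_constant_on_window_le (h : 2 * δ < ℓ) (ht : t ≤ ℓ) {i : ℕ}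
    (hi : i + t ≤ n) (b : Bool) :
    (#{x : Fin n → Bool | (∀ j ∈ zeroDelimiters n ℓ δ, x j = false) ∧
        (∀ j ∈ oneDelimiters n ℓ δ, x j = true) ∧ ∀ j ∈ window n i t, x j = b} : ℝ) ≤
      2 ^ ((n + δ + 1 : ℕ) - ((2 * δ + 1) * (n / ℓ - 1) + t : ℕ) : ℤ) := by
  set E : Finset (Fin n → Bool) := {x | (∀ j ∈ zeroDelimiters n ℓ δ, x j = false) ∧
    (∀ j ∈ oneDelimiters n ℓ δ, x j = true) ∧ ∀ j ∈ window n i t, x j = b}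
  set S := (zeroDelimiters n ℓ δ ∪ oneDelimiters n ℓ δ) ∪ window n i t
  have hagree : ∀ x ∈ E, ∀ y ∈ E, ∀ j ∈ S, x j = y j := by
    intro x hx y hy j hj
    simp only [E, mem_filter, mem_univ, true_and] at hx hy
    simp only [S, mem_union] at hj
    rcases hj with (hj | hj) | hj
    · rw [hx.1 j hj, hy.1 j hj]
    · rw [hx.2.1 j hj, hy.2.1 j hj]
    · rw [hx.2.2 j hj, hy.2.2 j hj]
  rcases E.eq_empty_or_nonempty with hE | ⟨x₀, hx₀⟩
  · rw [hE, card_empty, Nat.cast_zero]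
    positivity
  simp only [E, mem_filter, mem_univ, true_and] at hx₀
  have hS : (2 * δ + 1) * (n / ℓ - 1) + t ≤ #S + (δ + 1) := by
    have hunion : #S + #((zeroDelimiters n ℓ δ ∪ oneDelimiters n ℓ δ) ∩ window n i t) =
        #(zeroDelimiters n ℓ δ ∪ oneDelimiters n ℓ δ) + #(window n i t) :=
      card_union_add_card_inter _ _
    rw [card_delimiters h, card_window hi] at hunion
    have := card_delimiters_inter_window_le ht hx₀.1 hx₀.2.1 hx₀.2.2
    omega
  have hSn : #S ≤ n := card_le_univ S |>.trans_eq (Fintype.card_fin n)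
  calc (#E : ℝ) ≤ (2 ^ (n - #S) : ℕ) := by
        exact_mod_cast Fintype.card_fin n ▸ card_le_two_pow_of_forall_eq_on S hagree
    _ = (2 : ℝ) ^ ((n - #S : ℕ) : ℤ) := by push_cast [zpow_natCast]; rfl
    _ ≤ _ := zpow_le_zpow_right₀ one_le_two (by omega)

theorem card_delimited_with_constant_window_le (h : 2 * δ < ℓ) (ht : t ≤ ℓ) :
    (#{x : Fin n → Bool | (∃ i : Fin n, (i : ℕ) + t ≤ n ∧ ∀ j ∈ window n i t, x j = x i) ∧
        (∀ j ∈ zeroDelimiters n ℓ δ, x j = false) ∧ (∀ j ∈ oneDelimiters n ℓ δ, x j = true)} : ℝ) ≤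
      2 * n * 2 ^ ((n + δ + 1 : ℕ) - ((2 * δ + 1) * (n / ℓ - 1) + t : ℕ) : ℤ) := by
  set e : ℤ := (n + δ + 1 : ℕ) - ((2 * δ + 1) * (n / ℓ - 1) + t : ℕ)
  set I : Finset (Fin n × Bool) := {p | (p.1 : ℕ) + t ≤ n}
  set E : Fin n × Bool → Finset (Fin n → Bool) := fun p =>
    {x | (∀ j ∈ zeroDelimiters n ℓ δ, x j = false) ∧
      (∀ j ∈ oneDelimiters n ℓ δ, x j = true) ∧ ∀ j ∈ window n p.1 t, x j = p.2}
  have hcover : ({x | (∃ i : Fin n, (i : ℕ) + t ≤ n ∧ ∀ j ∈ window n i t, x j = x i) ∧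
      (∀ j ∈ zeroDelimiters n ℓ δ, x j = false) ∧ (∀ j ∈ oneDelimiters n ℓ δ, x j = true)} :
        Finset (Fin n → Bool)) ⊆ I.biUnion E := by
    intro x hx
    simp only [mem_filter, mem_univ, true_and] at hx
    obtain ⟨⟨i, hi, hconst⟩, hzero, hone⟩ := hx
    exact mem_biUnion.2
      ⟨(i, x i), mem_filter.2 ⟨mem_univ _, hi⟩, mem_filter.2 ⟨mem_univ _, hzero, hone, hconst⟩⟩
  have hI : (#I : ℝ) ≤ 2 * n := by
    exact_mod_cast (card_filter_le _ _).trans_eq (by simp [mul_comm])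
  calc _ ≤ ∑ p ∈ I, (#(E p) : ℝ) := by
        exact_mod_cast (card_le_card hcover).trans card_biUnion_le
    _ ≤ ∑ _p ∈ I, (2 : ℝ) ^ e :=
        sum_le_sum fun p hp => card_delimited_constant_on_window_le h ht (mem_filter.1 hp).2 p.2
    _ = #I * (2 : ℝ) ^ e := by rw [sum_const, nsmul_eq_mul]
    _ ≤ 2 * n * (2 : ℝ) ^ e := by gcongr

end Counting

theorem exists_constant_window_of_long_run {n : ℕ} {x : Fin n → Bool} {c : ℝ}
    (h : ∃ i : Fin n, ∃ s : ℕ, c < (s : ℝ) ∧ (i : ℕ) + s ≤ n ∧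
      ∀ m : Fin n, i ≤ m → (m : ℕ) < (i : ℕ) + s → x m = x i) :
    ∃ i : Fin n, (i : ℕ) + ⌈c⌉₊ ≤ n ∧ ∀ j ∈ window n i ⌈c⌉₊, x j = x i := by
  obtain ⟨i, s, hcs, hs, hrun⟩ := h
  have hceil : ⌈c⌉₊ ≤ s := Nat.ceil_le.2 hcs.le
  refine ⟨i, by omega, fun j hj => ?_⟩
  rw [mem_window] at hj
  exact hrun j (Fin.le_iff_val_le_val.2 hj.1) (by omega)

open scoped Classical in
theorem stmt12_general (n ℓ δ : ℕ) (h1 : 2*δ < ℓ) :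
    ((Finset.univ.filter (fun x : Fin n → Bool =>
       (∃ i : Fin n, ∃ s : ℕ, Real.sqrt ℓ < (s:ℝ) ∧ (i:ℕ) + s ≤ n ∧
          ∀ m : Fin n, i ≤ m → (m:ℕ) < (i:ℕ) + s → x m = x i) ∧
       (∀ m : ℕ, 1 ≤ m → m < n/ℓ →
         (∀ j : Fin n, m*ℓ - δ ≤ (j:ℕ) → (j:ℕ) < m*ℓ → x j = true) ∧
         (∀ j : Fin n, m*ℓ ≤ (j:ℕ) → (j:ℕ) ≤ m*ℓ + δ → x j = false)))).card : ℝ) / 2^n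
      ≤ (2:ℝ) ^ (-(((2*δ+1)*(n/ℓ - 1) : ℕ) : ℤ)) * n *
          (2:ℝ) ^ (-(⌈Real.sqrt ℓ⌉ - (δ:ℤ) - 2)) := by
  have ht : ⌈Real.sqrt ℓ⌉₊ ≤ ℓ :=
    Nat.ceil_le.2 (Real.sqrt_le_self_iff.2 (Or.inr (by exact_mod_cast (by omega : 1 ≤ ℓ))))
  calc _ ≤ (2 * n * 2 ^ ((n + δ + 1 : ℕ) - ((2 * δ + 1) * (n / ℓ - 1) + ⌈Real.sqrt ℓ⌉₊ : ℕ) : ℤ)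
        : ℝ) / 2 ^ n := by
        gcongr
        refine le_trans (Nat.cast_le.2 (card_le_card fun x hx => ?_))
          (card_delimited_with_constant_window_le h1 ht)
        simp only [mem_filter, mem_univ, true_and] at hx ⊢
        exact ⟨exists_constant_window_of_long_run hx.1, IsDelimited.eq_false hx.2,
          IsDelimited.eq_true hx.2⟩
    _ = _ := by
        rw [← Int.natCast_ceil_eq_ceil (Real.sqrt_nonneg _), div_eq_iff (by positivity),
          ← zpow_natCast (2 : ℝ) n]
        generalize (2 * δ + 1) * (n / ℓ - 1) = r
        generalize ⌈Real.sqrt ℓ⌉₊ = t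
        push_cast
        rw [show (n + δ + 1 - (r + t) : ℤ) = -1 + (-r + -(t - δ - 2) + n) by ring,
          zpow_add₀ two_ne_zero, zpow_add₀ two_ne_zero, zpow_add₀ two_ne_zero, zpow_neg_one]
        ring

open scoped Classical in
/-- For `X` uniform on `{0,1}^n`, the probability that `X` lies in the delimiter code
`𝒟_δ(ℓ,n)` and has a run longer than `√ℓ` is at most
`2^{-r_𝒟} · n · 2^{-(⌈√ℓ⌉ - δ - 2)}` with `r_𝒟 = (2δ+1)(n/ℓ-1)`. -/
theorem stmt12 (n ℓ δ : ℕ) (h1 : 2*δ < ℓ) (h2 : ℓ ≤ n/2) (h3 : ℓ ∣ n)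
    (h4 : (δ:ℝ) + 1 ≤ Real.sqrt ℓ) :
    ((Finset.univ.filter (fun x : Fin n → Bool =>
       (∃ i : Fin n, ∃ s : ℕ, Real.sqrt ℓ < (s:ℝ) ∧ (i:ℕ) + s ≤ n ∧
          ∀ m : Fin n, i ≤ m → (m:ℕ) < (i:ℕ) + s → x m = x i) ∧
       (∀ m : ℕ, 1 ≤ m → m < n/ℓ →
         (∀ j : Fin n, m*ℓ - δ ≤ (j:ℕ) → (j:ℕ) < m*ℓ → x j = true) ∧
         (∀ j : Fin n, m*ℓ ≤ (j:ℕ) → (j:ℕ) ≤ m*ℓ + δ → x j = false)))).card : ℝ) / 2^n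
      ≤ (2:ℝ) ^ (-(((2*δ+1)*(n/ℓ - 1) : ℕ) : ℤ)) * n *
          (2:ℝ) ^ (-(⌈Real.sqrt ℓ⌉ - (δ:ℤ) - 2)) :=
  stmt12_general n ℓ δ h1
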